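/- Let F be an infinite field. There are infinitely many isomorphism classes of 3-dimensional nilpotent non-unital associative F-algebras. In particular, the algebras A_{3,4}^α with basis a, b, c and nonzero products a² = αc, ab = c, b² = c, for α ranging over F, are pairwise non-isomorphic. -/

import Mathlib

/-- A nilpotent (non-unital) associative algebra structure on the `F`-vector space
`Fin n → F`: a bilinear, associative multiplication such that for some `m ≥ 1` every
product of `m` elements is zero. -/
structure NilpAlgStr (F : Type*) [Field F] (n : ℕ) where
  mul : (Fin n → F) →ₗ[F] (Fin n → F) →ₗ[F] (Fin n → F)
  assoc : ∀ x y z, mul (mul x y) z = mul x (mul y z)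
  nilpotent : ∃ m : ℕ, 0 < m ∧ ∀ (x : Fin n → F) (l : List (Fin n → F)),
      l.length + 1 = m → l.foldl (fun p q => mul p q) x = 0

/-- Two algebra structures are isomorphic when some linear automorphism intertwines
the multiplications. -/
def NilpAlgStr.Iso {F : Type*} [Field F] {n : ℕ} (P Q : NilpAlgStr F n) : Prop :=
  ∃ e : (Fin n → F) ≃ₗ[F] (Fin n → F), ∀ x y, e (P.mul x y) = Q.mul (e x) (e y)

/-- `A_{3,4}^α` : `a² = αc`, `ab = c`, `b² = c`, all other products of basis
elements zero. -/
def IsA34Basis {F A : Type*} [Field F] [NonUnitalRing A] [Module F A]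
    (α : F) (v : Module.Basis (Fin 3) F A) : Prop :=
  v 0 * v 0 = α • v 2 ∧ v 0 * v 1 = v 2 ∧ v 1 * v 1 = v 2 ∧
  v 1 * v 0 = 0 ∧ v 0 * v 2 = 0 ∧ v 2 * v 0 = 0 ∧
  v 1 * v 2 = 0 ∧ v 2 * v 1 = 0 ∧ v 2 * v 2 = 0

/-! In `A_{3,4}^α` every product is a multiple of `c`, namely `c` times the bilinear form with
Gram matrix `M_α = [[α, 1], [0, 1]]` on the `a, b`-coordinates, so all triple products vanish.
An isomorphism `A_{3,4}^α ≅ A_{3,4}^β` sends `c` to `L • c` with `L ≠ 0` and yields a congruence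
`Pᵀ M_β P = L • M_α`. Comparing antisymmetric parts gives `det P = L`, and comparing
determinants then `L² β = L² α`. The same multiplication table on `Fin 3 → F` therefore
gives pairwise non-isomorphic nilpotent structures indexed by the infinite field `F`. -/

open Module

section

variable {F : Type*} [Field F]

def a34Form (α : F) (x y : Fin 3 → F) : F :=
  α * (x 0 * y 0) + x 0 * y 1 + x 1 * y 1

theorem eq_of_a34Form_congr {α β : F} {x y : Fin 3 → F} (hxy : a34Form β x y ≠ 0)
    (hyx : a34Form β y x = 0) (hyy : a34Form β y y = a34Form β x y)
    (hxx : a34Form β x x = α * a34Form β x y) : α = β := by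
  unfold a34Form at *
  set L := β * (x 0 * y 0) + x 0 * y 1 + x 1 * y 1
  have hdet : x 0 * y 1 - x 1 * y 0 = L := by linear_combination -hyx
  refine mul_right_cancel₀ (mul_ne_zero hxy hxy) ?_
  linear_combination (-L) * hxx - (β * (x 0 * x 0) + x 0 * x 1 + x 1 * x 1) * hyy
    + L * hyx + β * (x 0 * y 1 - x 1 * y 0 + L) * hdet

variable {M N : Type*} [AddCommGroup M] [Module F M] [AddCommGroup N] [Module F N]

structure IsA34Table (μ : M →ₗ[F] M →ₗ[F] M) (α : F) (v : Basis (Fin 3) F M) : Prop where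
  mul00 : μ (v 0) (v 0) = α • v 2
  mul01 : μ (v 0) (v 1) = v 2
  mul11 : μ (v 1) (v 1) = v 2
  mul10 : μ (v 1) (v 0) = 0
  mul02 : μ (v 0) (v 2) = 0
  mul20 : μ (v 2) (v 0) = 0
  mul12 : μ (v 1) (v 2) = 0
  mul21 : μ (v 2) (v 1) = 0
  mul22 : μ (v 2) (v 2) = 0

namespace IsA34Table

variable {μ : M →ₗ[F] M →ₗ[F] M} {α : F} {v : Basis (Fin 3) F M}

theorem apply_eq (h : IsA34Table μ α v) (x y : M) :
    μ x y = a34Form α (v.repr x) (v.repr y) • v 2 := by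
  conv_lhs => rw [← v.sum_repr x, ← v.sum_repr y]
  simp only [Fin.sum_univ_three, map_add, map_smul, LinearMap.add_apply, LinearMap.smul_apply,
    h.mul00, h.mul01, h.mul11, h.mul10, h.mul02, h.mul20, h.mul12, h.mul21, h.mul22, a34Form]
  module

theorem apply_apply_left (h : IsA34Table μ α v) (x y z : M) : μ (μ x y) z = 0 := by
  rw [h.apply_eq (μ x y), h.apply_eq x y]
  simp [a34Form]

theorem apply_apply_right (h : IsA34Table μ α v) (x y z : M) : μ x (μ y z) = 0 := by
  rw [h.apply_eq x (μ y z), h.apply_eq y z]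
  simp [a34Form]

theorem eq_of_linearEquiv {ν : N →ₗ[F] N →ₗ[F] N} {β : F} {w : Basis (Fin 3) F N}
    (hv : IsA34Table μ α v) (hw : IsA34Table ν β w) (e : M ≃ₗ[F] N)
    (he : ∀ x y, e (μ x y) = ν (e x) (e y)) : α = β := by
  have image : ∀ i j,
      e (μ (v i) (v j)) = a34Form β (w.repr (e (v i))) (w.repr (e (v j))) • w 2 :=
    fun i j => by rw [he, hw.apply_eq]
  have coeff_inj : ∀ a b : F, a • w 2 = b • w 2 → a = b :=
    fun _ _ h => smul_left_injective F (w.ne_zero 2) h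
  refine eq_of_a34Form_congr (x := w.repr (e (v 0))) (y := w.repr (e (v 1))) ?_ ?_ ?_ ?_
  · intro hL
    apply v.ne_zero 2
    rw [← e.map_eq_zero_iff, ← hv.mul01, image, hL, zero_smul]
  · exact coeff_inj _ _ <| by rw [← image, hv.mul10, map_zero, zero_smul]
  · exact coeff_inj _ _ <| by rw [← image, ← image, hv.mul11, hv.mul01]
  · exact coeff_inj _ _ <| by rw [← image, ← smul_smul, ← image, hv.mul00, hv.mul01, map_smul]

end IsA34Table

theorem IsA34Basis.isA34Table {A : Type*} [NonUnitalRing A] [Module F A]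
    [SMulCommClass F A A] [IsScalarTower F A A] {α : F} {v : Basis (Fin 3) F A}
    (h : IsA34Basis α v) :
    IsA34Table (LinearMap.mul F A) α v :=
  let ⟨h00, h01, h11, h10, h02, h20, h12, h21, h22⟩ := h
  ⟨h00, h01, h11, h10, h02, h20, h12, h21, h22⟩

noncomputable def a34Mul (α : F) : (Fin 3 → F) →ₗ[F] (Fin 3 → F) →ₗ[F] (Fin 3 → F) :=
  LinearMap.mk₂ F (fun x y => a34Form α x y • Pi.single 2 1)
    (fun _ _ _ => by rw [← add_smul]; congr 1; simp only [a34Form, Pi.add_apply]; ring)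
    (fun _ _ _ => by rw [smul_smul]; congr 1; simp only [a34Form, Pi.smul_apply, smul_eq_mul]; ring)
    (fun _ _ _ => by rw [← add_smul]; congr 1; simp only [a34Form, Pi.add_apply]; ring)
    (fun _ _ _ => by rw [smul_smul]; congr 1; simp only [a34Form, Pi.smul_apply, smul_eq_mul]; ring)

theorem isA34Table_a34Mul (α : F) : IsA34Table (a34Mul α) α (Pi.basisFun F (Fin 3)) := by
  constructor <;> ext i <;> fin_cases i <;> simp [a34Mul, a34Form]

noncomputable def a34Alg (α : F) : NilpAlgStr F 3 where
  mul := a34Mul α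
  assoc x y z := by
    rw [(isA34Table_a34Mul α).apply_apply_left, (isA34Table_a34Mul α).apply_apply_right]
  nilpotent := by
    refine ⟨3, by norm_num, fun x l hl => ?_⟩
    obtain ⟨a, b, rfl⟩ := List.length_eq_two.mp (by omega : l.length = 2)
    exact (isA34Table_a34Mul α).apply_apply_left x a b

theorem NilpAlgStr.iso_equivalence {n : ℕ} : Equivalence (@NilpAlgStr.Iso F _ n) where
  refl _ := ⟨LinearEquiv.refl F _, fun _ _ => rfl⟩
  symm := fun ⟨e, he⟩ =>
    ⟨e.symm, fun x y => e.injective <| by simp only [he, e.apply_symm_apply]⟩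
  trans := fun ⟨e, he⟩ ⟨f, hf⟩ =>
    ⟨e.trans f, fun x y => by simp only [LinearEquiv.trans_apply, he, hf]⟩

theorem infinite_quot_nilpAlgStr_iso [Infinite F] : Infinite (Quot (@NilpAlgStr.Iso F _ 3)) := by
  refine Infinite.of_injective (fun α : F => Quot.mk _ (a34Alg α)) fun α β hαβ => ?_
  obtain ⟨e, he⟩ := NilpAlgStr.iso_equivalence.eqvGen_iff.mp (Quot.eq.mp hαβ)
  exact (isA34Table_a34Mul α).eq_of_linearEquiv (isA34Table_a34Mul β) e he

end

/-- Over an infinite field there are infinitely many isomorphism classes of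
3-dimensional nilpotent non-unital associative algebras; in particular the algebras
`A_{3,4}^α`, `α ∈ F`, are pairwise non-isomorphic. -/
theorem stmt13 (F : Type) [Field F] [Infinite F] :
    Infinite (Quot (@NilpAlgStr.Iso F _ 3)) ∧
    ∀ (A B : Type) [NonUnitalRing A] [Module F A] [SMulCommClass F A A]
      [IsScalarTower F A A] [NonUnitalRing B] [Module F B] [SMulCommClass F B B]
      [IsScalarTower F B B] (α β : F)
      (v : Module.Basis (Fin 3) F A) (w : Module.Basis (Fin 3) F B),
      IsA34Basis α v → IsA34Basis β w → α ≠ β →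
      ¬ ∃ e : A ≃ₗ[F] B, ∀ x y : A, e (x * y) = e x * e y := by
  refine ⟨infinite_quot_nilpAlgStr_iso, ?_⟩
  intro A B _ _ _ _ _ _ _ _ α β v w hv hw hαβ ⟨e, he⟩
  exact hαβ (hv.isA34Table.eq_of_linearEquiv hw.isA34Table e he)
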